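/- Let T be a finite nonempty tree (a connected acyclic graph) and let H be a finite nonempty graph. Then Γ(T[H]) = Γ(T) · Γ(H). -/

import Mathlib

open SimpleGraph

/-- A greedy `k`-coloring of `G`: a partition of the vertex set into nonempty stable sets
`S 0, …, S (k-1)` such that for all `j < i`, every vertex of `S i` has a neighbor in `S j`. -/
def IsGreedyColoring {V : Type*} (G : SimpleGraph V) (k : ℕ) (S : Fin k → Set V) : Prop :=
  (∀ v : V, ∃! i, v ∈ S i) ∧
  (∀ i, (S i).Nonempty) ∧
  (∀ i, ∀ v ∈ S i, ∀ w ∈ S i, ¬ G.Adj v w) ∧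
  (∀ i j : Fin k, j < i → ∀ v ∈ S i, ∃ w ∈ S j, G.Adj v w)

/-- The Grundy number `Γ(G)`: the largest `k` such that `G` has a greedy `k`-coloring. -/
noncomputable def grundy {V : Type*} [Fintype V] (G : SimpleGraph V) : ℕ :=
  sSup {k | ∃ S : Fin k → Set V, IsGreedyColoring G k S}

/-- Lexicographic product `G[H]`: `(a,x)` adjacent to `(b,y)` iff `ab ∈ E(G)`,
or `a = b` and `xy ∈ E(H)`. -/
def lexProd {α β : Type*} (G : SimpleGraph α) (H : SimpleGraph β) :
    SimpleGraph (α × β) where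
  Adj x y := G.Adj x.1 y.1 ∨ (x.1 = y.1 ∧ H.Adj x.2 y.2)
  symm := ⟨fun _ _ h => by
    rcases h with h | ⟨h1, h2⟩
    · exact Or.inl (G.adj_symm h)
    · exact Or.inr ⟨h1.symm, H.adj_symm h2⟩⟩
  loopless := ⟨fun _ h => by
    rcases h with h | ⟨-, h2⟩
    · exact G.irrefl h
    · exact H.irrefl h2⟩

/-!
Blowing up every colour class of a greedy colouring of `G` by a greedy colouring of `H`, with the
colours ordered lexicographically, gives a greedy colouring of `G[H]`; so `Γ(G) Γ(H) ≤ Γ(G[H])`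
for all graphs.

Conversely, take a greedy colouring of `T[H]`. A fibre `{a} × H` carries at most `Γ(H)` colours,
and a colour `c` at `a` sees every smaller colour at `a` or at a neighbour of `a`. In a tree this
forces a binomial tree `B_t` rooted at `a` with `t = ⌊c / Γ(H)⌋` (`B_{t+1}` is two copies of
`B_t` with adjacent roots). Its two halves lie in different branches at the root, so colouring
them recursively gives a partial greedy colouring of `T` with `t + 1` colours, the root taking the
last one; and a partial greedy colouring extends to a greedy colouring. Hence `c < Γ(H) Γ(T)`.
-/

open SimpleGraph Finset

section Greedy

variable {V : Type*} {G : SimpleGraph V}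

structure IsPartialGreedyColoring (G : SimpleGraph V) {k : ℕ} (C : Fin k → Set V) : Prop where
  nonempty : ∀ i, (C i).Nonempty
  not_adj : ∀ i, ∀ v ∈ C i, ∀ w ∈ C i, ¬ G.Adj v w
  disjoint : Pairwise fun i j => Disjoint (C i) (C j)
  exists_adj : ∀ i j, j < i → ∀ v ∈ C i, ∃ w ∈ C j, G.Adj v w

structure IsGreedyLabeling (G : SimpleGraph V) (f : V → ℕ) : Prop where
  ne_of_adj : ∀ ⦃v w⦄, G.Adj v w → f v ≠ f w
  exists_adj : ∀ v, ∀ j < f v, ∃ w, G.Adj v w ∧ f w = j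

theorem isPartialGreedyColoring_elim0 :
    IsPartialGreedyColoring G (Fin.elim0 : Fin 0 → Set V) :=
  ⟨fun i => i.elim0, fun i => i.elim0, fun i => i.elim0, fun i => i.elim0⟩

theorem IsGreedyColoring.isPartialGreedyColoring {k : ℕ} {S : Fin k → Set V}
    (hS : IsGreedyColoring G k S) : IsPartialGreedyColoring G S where
  nonempty := hS.2.1
  not_adj := hS.2.2.1
  disjoint _ _ hij := Set.disjoint_left.2 fun v hi hj => hij ((hS.1 v).unique hi hj)
  exists_adj := hS.2.2.2

namespace IsPartialGreedyColoring

variable {k : ℕ} {C : Fin k → Set V}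

theorem exists_proper_extension [Fintype V] (hC : IsPartialGreedyColoring G C) :
    ∃ f : V → ℕ, (∀ ⦃v w⦄, G.Adj v w → f v ≠ f w) ∧ ∀ i, ∀ v ∈ C i, f v = i := by
  classical
  let e := Fintype.equivFin V
  have hclass : ∀ {v : V} (h : ∃ i, v ∈ C i) i, v ∈ C i → h.choose = i := fun h i hi => by
    by_contra hne
    exact Set.disjoint_left.1 (hC.disjoint hne) h.choose_spec hi
  refine ⟨fun v => if h : ∃ i, v ∈ C i then h.choose else k + e v, fun v w hvw => ?_,
    fun i v hv => by simp only [dif_pos (⟨i, hv⟩ : ∃ i, v ∈ C i), hclass _ i hv]⟩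
  by_cases hv : ∃ i, v ∈ C i <;> by_cases hw : ∃ i, w ∈ C i <;>
    simp only [hv, hw, dif_pos, dif_neg, not_false_iff]
  · intro h
    exact hC.not_adj _ v hv.choose_spec w (Fin.ext h ▸ hw.choose_spec) hvw
  · have := hv.choose.2; omega
  · have := hw.choose.2; omega
  · intro h
    exact G.ne_of_adj hvw (e.injective (Fin.ext (by omega)))

/-- A colouring of minimal total weight among the proper extensions of `C` is greedy: a vertex
missing colour `j < f v` in its neighbourhood could be recoloured `j`. -/
theorem exists_isGreedyLabeling [Fintype V] (hC : IsPartialGreedyColoring G C) :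
    ∃ f, IsGreedyLabeling G f ∧ ∀ i, ∀ v ∈ C i, f v = i := by
  classical
  obtain ⟨f, ⟨hproper, hfC⟩, hmin⟩ := (measure fun f : V → ℕ => ∑ v, f v).wf.has_min
    {f | (∀ ⦃v w⦄, G.Adj v w → f v ≠ f w) ∧ ∀ i, ∀ v ∈ C i, f v = i} hC.exists_proper_extension
  refine ⟨f, ⟨hproper, fun v j hj => ?_⟩, hfC⟩
  by_cases hv : ∃ i, v ∈ C i
  · obtain ⟨i, hvi⟩ := hv
    rw [hfC i v hvi] at hj
    obtain ⟨w, hw, hvw⟩ := hC.exists_adj i ⟨j, hj.trans i.2⟩ hj v hvi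
    exact ⟨w, hvw, hfC _ w hw⟩
  by_contra! hmissing
  refine hmin (Function.update f v j) ⟨fun u w huw => ?_, fun i u hu => ?_⟩ ?_
  · simp only [Function.update_apply]
    split_ifs with hu hw hw
    · exact absurd (hu.trans hw.symm) (G.ne_of_adj huw)
    · exact (hmissing w (hu ▸ huw)).symm
    · exact hmissing u (hw ▸ huw.symm)
    · exact hproper huw
  · rw [Function.update_of_ne (by rintro rfl; exact hv ⟨i, hu⟩)]
    exact hfC i u hu
  · show ∑ u, Function.update f v j u < ∑ u, f u
    refine Finset.sum_lt_sum (fun u _ => ?_) ⟨v, mem_univ v, by rwa [Function.update_self]⟩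
    rw [Function.update_apply]
    split_ifs with hu
    · exact hu ▸ hj.le
    · exact le_rfl

end IsPartialGreedyColoring

theorem IsGreedyLabeling.isGreedyColoring [Fintype V] {f : V → ℕ} (hf : IsGreedyLabeling G f) :
    IsGreedyColoring G (univ.sup fun v => f v + 1) fun j => {v | f v = j} := by
  have hlt : ∀ v, f v < univ.sup fun v => f v + 1 :=
    fun v => Finset.lt_sup_iff.2 ⟨v, mem_univ v, lt_add_one _⟩
  refine ⟨fun v => ⟨⟨f v, hlt v⟩, rfl, fun i hi => Fin.ext hi.symm⟩, fun j => ?_,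
    fun j v hv w hw hvw => hf.ne_of_adj hvw (hv.trans hw.symm), fun i j hji v hv => ?_⟩
  · obtain ⟨v, -, hv⟩ := Finset.lt_sup_iff.1 j.2
    rcases (Nat.lt_succ_iff.1 hv).eq_or_lt with h | h
    · exact ⟨v, h.symm⟩
    · obtain ⟨w, -, hw⟩ := hf.exists_adj v j h
      exact ⟨w, hw⟩
  · obtain ⟨w, hvw, hw⟩ := hf.exists_adj v j (hv ▸ hji)
    exact ⟨w, hw, hvw⟩

section Grundy

variable [Fintype V]

theorem grundy_bddAbove (G : SimpleGraph V) :
    BddAbove {k | ∃ S : Fin k → Set V, IsGreedyColoring G k S} := by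
  refine ⟨Fintype.card V, fun k ⟨S, hS⟩ => ?_⟩
  have hC := hS.isPartialGreedyColoring
  refine (Fintype.card_fin k).symm.trans_le
    (Fintype.card_le_of_injective (fun i => (hC.nonempty i).some) fun i j hij => ?_)
  by_contra hne
  have hij : (hC.nonempty i).some = (hC.nonempty j).some := hij
  exact Set.disjoint_left.1 (hC.disjoint hne) (hC.nonempty i).some_mem
    (hij ▸ (hC.nonempty j).some_mem)

theorem exists_isGreedyColoring_grundy (G : SimpleGraph V) :
    ∃ S, IsGreedyColoring G (grundy G) S := by
  obtain ⟨f, hf, -⟩ := (isPartialGreedyColoring_elim0 (G := G)).exists_isGreedyLabeling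
  have hne : {k | ∃ S : Fin k → Set V, IsGreedyColoring G k S}.Nonempty :=
    ⟨_, _, hf.isGreedyColoring⟩
  exact Nat.sSup_mem hne (grundy_bddAbove G)

theorem IsGreedyColoring.le_grundy {k : ℕ} {S : Fin k → Set V} (hS : IsGreedyColoring G k S) :
    k ≤ grundy G :=
  le_csSup (grundy_bddAbove G) ⟨S, hS⟩

theorem IsGreedyLabeling.lt_grundy {f : V → ℕ} (hf : IsGreedyLabeling G f) (v : V) :
    f v < grundy G :=
  (Finset.lt_sup_iff.2 ⟨v, mem_univ v, lt_add_one _⟩).trans_le hf.isGreedyColoring.le_grundy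

theorem IsPartialGreedyColoring.le_grundy {k : ℕ} {C : Fin k → Set V}
    (hC : IsPartialGreedyColoring G C) : k ≤ grundy G := by
  obtain ⟨f, hf, hfC⟩ := hC.exists_isGreedyLabeling
  cases k with
  | zero => exact Nat.zero_le _
  | succ k =>
    obtain ⟨v, hv⟩ := hC.nonempty (Fin.last k)
    simpa [hfC _ v hv] using hf.lt_grundy v

theorem grundy_le_of_forall_lt {n : ℕ} (h : ∀ f, IsGreedyLabeling G f → ∀ v, f v < n) :
    grundy G ≤ n := by
  obtain ⟨S, hS⟩ := exists_isGreedyColoring_grundy G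
  obtain ⟨f, hf, hfS⟩ := hS.isPartialGreedyColoring.exists_isGreedyLabeling
  rcases Nat.eq_zero_or_pos (grundy G) with h0 | hpos
  · omega
  obtain ⟨v, hv⟩ := hS.2.1 ⟨grundy G - 1, by omega⟩
  have hlt := h f hf v
  rw [hfS _ v hv] at hlt
  change grundy G - 1 < n at hlt
  omega

end Grundy

end Greedy

namespace IsPartialGreedyColoring

variable {V : Type*} {G : SimpleGraph V} {k : ℕ} {C : Fin k → Set V}

theorem union {D : Fin k → Set V} (hC : IsPartialGreedyColoring G C)
    (hD : IsPartialGreedyColoring G D) {A B : Set V} (hCA : ∀ i, C i ⊆ A) (hDB : ∀ i, D i ⊆ B)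
    (hAB : Disjoint A B) (hnadj : ∀ v ∈ A, ∀ w ∈ B, ¬ G.Adj v w) :
    IsPartialGreedyColoring G fun i => C i ∪ D i where
  nonempty i := (hC.nonempty i).mono Set.subset_union_left
  not_adj i := by
    rintro v (hv | hv) w (hw | hw) hvw
    · exact hC.not_adj i v hv w hw hvw
    · exact hnadj v (hCA i hv) w (hDB i hw) hvw
    · exact hnadj w (hCA i hw) v (hDB i hv) hvw.symm
    · exact hD.not_adj i v hv w hw hvw
  disjoint i j hij := by
    simp only [Set.disjoint_union_left, Set.disjoint_union_right]
    exact ⟨⟨hC.disjoint hij, (hAB.mono (hCA j) (hDB i)).symm⟩,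
      ⟨hAB.mono (hCA i) (hDB j), hD.disjoint hij⟩⟩
  exists_adj i j hji := by
    rintro v (hv | hv)
    · obtain ⟨w, hw, hvw⟩ := hC.exists_adj i j hji v hv
      exact ⟨w, Or.inl hw, hvw⟩
    · obtain ⟨w, hw, hvw⟩ := hD.exists_adj i j hji v hv
      exact ⟨w, Or.inr hw, hvw⟩

theorem snoc (hC : IsPartialGreedyColoring G C) {v : V} (hv : ∀ i, v ∉ C i)
    (hadj : ∀ i, ∃ w ∈ C i, G.Adj v w) :
    IsPartialGreedyColoring G (Fin.snoc (α := fun _ => Set V) C {v}) where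
  nonempty i := by
    induction i using Fin.lastCases with
    | last => simp
    | cast i => simpa using hC.nonempty i
  not_adj i := by
    induction i using Fin.lastCases with
    | last =>
      simp only [Fin.snoc_last, Set.mem_singleton_iff]
      rintro _ rfl _ rfl
      exact G.irrefl
    | cast i => simpa using hC.not_adj i
  disjoint i j hij := by
    induction i using Fin.lastCases with
    | last =>
      induction j using Fin.lastCases with
      | last => exact absurd rfl hij
      | cast j => simpa using hv j
    | cast i =>
      induction j using Fin.lastCases with
      | last => simpa using hv i
      | cast j => simpa using hC.disjoint (fun h => hij (congrArg _ h))
  exists_adj i j hji := by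
    induction i using Fin.lastCases with
    | last =>
      obtain ⟨j, rfl⟩ := Fin.exists_castSucc_eq.2 hji.ne
      simpa using hadj j
    | cast i =>
      obtain ⟨j, rfl⟩ := Fin.exists_castSucc_eq.2 (hji.trans (Fin.castSucc_lt_last i)).ne
      simpa using hC.exists_adj i j (Fin.castSucc_lt_castSucc_iff.1 hji)

theorem lexProd {β : Type*} {H : SimpleGraph β} {m n : ℕ} {S : Fin m → Set V}
    {R : Fin n → Set β} (hS : IsPartialGreedyColoring G S) (hR : IsPartialGreedyColoring H R) :
    IsPartialGreedyColoring (_root_.lexProd G H)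
      fun e : Fin (m * n) => S e.divNat ×ˢ R e.modNat where
  nonempty e := (hS.nonempty _).prod (hR.nonempty _)
  not_adj e := by
    rintro ⟨a, x⟩ ⟨ha, hx⟩ ⟨b, y⟩ ⟨hb, hy⟩ (hab | ⟨-, hxy⟩)
    exacts [hS.not_adj _ a ha b hb hab, hR.not_adj _ x hx y hy hxy]
  disjoint e e' hne := by
    have hdiv := Nat.div_add_mod (e : ℕ) n
    have hdiv' := Nat.div_add_mod (e' : ℕ) n
    by_cases hq : e.divNat = e'.divNat
    · refine Set.disjoint_prod.2 (Or.inr (hR.disjoint fun hr => hne (Fin.ext ?_)))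
      rw [← hdiv, ← hdiv']
      simp only [Fin.ext_iff, Fin.coe_divNat, Fin.coe_modNat] at hq hr
      rw [hq, hr]
    · exact Set.disjoint_prod.2 (Or.inl (hS.disjoint hq))
  exists_adj e e' he := by
    rintro ⟨a, x⟩ ⟨ha, hx⟩
    rcases (Nat.div_le_div_right (c := n) he.le).lt_or_eq with hlt | heq
    · obtain ⟨b, hb, hab⟩ := hS.exists_adj e.divNat e'.divNat hlt a ha
      obtain ⟨y, hy⟩ := hR.nonempty e'.modNat
      exact ⟨(b, y), ⟨hb, hy⟩, Or.inl hab⟩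
    · have hdiv := Nat.div_add_mod (e : ℕ) n
      have hdiv' := Nat.div_add_mod (e' : ℕ) n
      rw [heq] at hdiv'
      have hmod : e'.modNat < e.modNat := by
        change (e' : ℕ) % n < (e : ℕ) % n
        have : (e' : ℕ) < e := he
        omega
      obtain ⟨y, hy, hxy⟩ := hR.exists_adj _ _ hmod x hx
      exact ⟨(a, y), ⟨(Fin.ext heq : e'.divNat = e.divNat) ▸ ha, hy⟩, Or.inr ⟨rfl, hxy⟩⟩

end IsPartialGreedyColoring

section Fibers

variable {α β : Type*} [Fintype β] {G : SimpleGraph α} {H : SimpleGraph β}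

def fiberLabels (F : α × β → ℕ) (a : α) : Finset ℕ := univ.image fun x => F (a, x)

namespace IsGreedyLabeling

variable {F : α × β → ℕ}

/-- Ranking the labels of a fibre turns it into a partial greedy colouring of `H`: a smaller label
of the fibre can only be witnessed inside the fibre, since adjacent fibres are completely
joined. -/
theorem card_fiberLabels_le (hF : IsGreedyLabeling (lexProd G H) F) (a : α) :
    #(fiberLabels F a) ≤ grundy H := by
  set e := (fiberLabels F a).orderEmbOfFin rfl
  have he : ∀ m, ∃ x, F (a, x) = e m := fun m =>
    let ⟨x, _, hx⟩ := mem_image.1 ((fiberLabels F a).orderEmbOfFin_mem rfl m)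
    ⟨x, hx⟩
  refine IsPartialGreedyColoring.le_grundy (C := fun m => {x | F (a, x) = e m})
    ⟨fun m => he m, fun m x hx y hy hxy =>
      hF.ne_of_adj (v := (a, x)) (w := (a, y)) (Or.inr ⟨rfl, hxy⟩) (hx.trans hy.symm),
      fun m m' hmm' => Set.disjoint_left.2 fun x hx hx' => hmm' (e.injective (hx.symm.trans hx')),
      fun m m' hm'm x hx => ?_⟩
  obtain ⟨⟨b, y⟩, hab | ⟨rfl, hxy⟩, hy⟩ :=
    hF.exists_adj (a, x) (e m') (hx ▸ e.strictMono hm'm)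
  · obtain ⟨z, hz⟩ := he m'
    exact absurd (hz.trans hy.symm) (hF.ne_of_adj (Or.inl hab))
  · exact ⟨y, hy, hxy⟩

theorem fiberLabels_cover (hF : IsGreedyLabeling (lexProd G H) F) {a : α} {i j : ℕ}
    (hi : i ∈ fiberLabels F a) (hj : j < i) :
    j ∈ fiberLabels F a ∨ ∃ b, G.Adj a b ∧ j ∈ fiberLabels F b := by
  obtain ⟨x, -, rfl⟩ := mem_image.1 hi
  obtain ⟨⟨b, y⟩, hab | ⟨rfl, -⟩, rfl⟩ := hF.exists_adj (a, x) j hj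
  · exact Or.inr ⟨b, hab, mem_image_of_mem _ (mem_univ y)⟩
  · exact Or.inl (mem_image_of_mem _ (mem_univ y))

end IsGreedyLabeling

end Fibers

section BinomialTree

variable {α : Type*} [DecidableEq α]

/-- `HasBinomialTree G t a X`: `G` contains a homomorphic image of the binomial tree `B_t`, rooted
at `a` and using no neighbour of `a` in `X`; `B_{t+1}` is two copies of `B_t` with adjacent
roots. -/
def HasBinomialTree (G : SimpleGraph α) : ℕ → α → Finset α → Prop
  | 0, _, _ => True
  | t + 1, a, X =>
    ∃ b ∉ X, G.Adj a b ∧ HasBinomialTree G t b {a} ∧ HasBinomialTree G t a (insert b X)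

theorem card_inter_range_lt {s : Finset ℕ} {j : ℕ} (hj : j ∈ s) : #(s ∩ range j) < #s :=
  card_lt_card ⟨inter_subset_left, fun h => by simpa using h hj⟩

/-- The largest `x < j` outside `B` has at least `#(range j \ B) - 1` non-elements of `A` below
it. -/
theorem exists_lt_notMem_add_card_le {A B : Finset ℕ} (hAB : A ⊆ B) {n j : ℕ}
    (h : n + #(B ∩ range j) < j) : ∃ x < j, x ∉ B ∧ n + #(A ∩ range x) ≤ x := by
  have hM := card_sdiff_add_card_inter (range j) B
  rw [card_range, inter_comm] at hM
  have hMne : (range j \ B).Nonempty := card_pos.1 (by omega)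
  obtain ⟨x, hxM, hxmax⟩ : ∃ x ∈ range j \ B, ∀ y ∈ range j \ B, y ≤ x :=
    ⟨_, max'_mem _ hMne, fun y hy => le_max' _ y hy⟩
  have hsub : (range j \ B).erase x ⊆ range x \ A := fun y hy => by
    obtain ⟨hyx, hyM⟩ := mem_erase.1 hy
    exact mem_sdiff.2 ⟨mem_range.2 ((hxmax y hyM).lt_of_ne hyx),
      fun hyA => (mem_sdiff.1 hyM).2 (hAB hyA)⟩
  have hcard := card_le_card hsub
  have hx := card_sdiff_add_card_inter (range x) A
  rw [card_erase_of_mem hxM] at hcard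
  rw [card_range, inter_comm] at hx
  obtain ⟨hxj, hxB⟩ := mem_sdiff.1 hxM
  exact ⟨x, mem_range.1 hxj, hxB, by omega⟩

/-- The neighbour `b` carrying the largest colour `x < j` that is neither at `a` nor at a vertex of
`X` roots one half of `B_{t+1}`, and `a` roots the other; the budget pays for both halves. -/
theorem hasBinomialTree_of_labels {G : SimpleGraph α} {L : α → Finset ℕ} {q : ℕ}
    (hcard : ∀ a, #(L a) ≤ q)
    (hcov : ∀ a, ∀ i ∈ L a, ∀ j < i, j ∈ L a ∨ ∃ b, G.Adj a b ∧ j ∈ L b) (t : ℕ) :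
    ∀ a X j, j ∈ L a → t * q + #((L a ∪ X.biUnion L) ∩ range j) < j + q →
      HasBinomialTree G t a X := by
  induction t with
  | zero => intros; trivial
  | succ t ih =>
    intro a X j hj hbudget
    rw [add_mul, one_mul] at hbudget
    obtain ⟨x, hxj, hxB, hx⟩ :=
      exists_lt_notMem_add_card_le (A := L a) (B := L a ∪ X.biUnion L) subset_union_left
        (n := t * q) (j := j) (by omega)
    rw [mem_union, not_or] at hxB
    obtain ⟨b, hab, hxb⟩ := (hcov a j hj x hxj).resolve_left hxB.1
    have hbX : b ∉ X := fun hb => hxB.2 (mem_biUnion.2 ⟨b, hb, hxb⟩)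
    have hLb := (card_inter_range_lt hxb).trans_le (hcard b)
    refine ⟨b, hbX, hab, ih b {a} x hxb ?_, ih a (insert b X) j hj ?_⟩
    · rw [singleton_biUnion, union_inter_distrib_right]
      have := card_union_le (L b ∩ range x) (L a ∩ range x)
      omega
    · have hsub :
          (L a ∪ (insert b X).biUnion L) ∩ range j ⊆ (L a ∪ X.biUnion L) ∩ range j ∪ L b := by
        intro y
        simp only [biUnion_insert, mem_inter, mem_union]
        tauto
      have := (card_le_card hsub).trans (card_union_le _ _)
      have := hcard b
      omega

end BinomialTree

section Tree

variable {α : Type*} {T : SimpleGraph α}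

/-- For adjacent `a`, `b` in a tree: the component of `T - ab` containing `b`. -/
def branch (T : SimpleGraph α) (a b : α) : Set α := {v | T.dist v b < T.dist v a}

def branches (T : SimpleGraph α) (a : α) (X : Finset α) : Set α :=
  {v | ∃ b ∉ X, T.Adj a b ∧ v ∈ branch T a b}

theorem mem_branch_self {a b : α} (hab : T.Adj a b) : b ∈ branch T a b := by
  simp [branch, dist_eq_one_iff_adj.2 hab.symm]

theorem notMem_branch (a b : α) : a ∉ branch T a b := by
  simp [branch]

theorem notMem_branches {a : α} {X : Finset α} : a ∉ branches T a X :=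
  fun ⟨_, _, _, ha⟩ => notMem_branch _ _ ha

namespace SimpleGraph.IsTree

variable (hT : T.IsTree)
include hT

theorem mem_support_of_dist_lt {v a b : α} (hab : T.Adj a b) (h : T.dist v b < T.dist v a)
    {p : T.Walk v a} (hp : p.IsPath) : b ∈ p.support := by
  classical
  obtain ⟨q, hq, hql⟩ := (hT.connected v b).exists_path_of_dist
  refine hT.isAcyclic.mem_support_of_ne_mem_support_of_adj_of_isPath hp hq hab fun ha => ?_
  have := T.dist_le (q.takeUntil a ha)
  have := q.length_takeUntil_le_length ha
  omega

theorem eq_of_adj_of_dist_lt {v a b c : α} (hab : T.Adj a b) (hac : T.Adj a c)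
    (hb : T.dist v b < T.dist v a) (hc : T.dist v c < T.dist v a) : b = c := by
  obtain ⟨p, hp, -⟩ := (hT.connected v a).exists_path_of_dist
  rw [hT.isAcyclic.eq_penultimate_of_adj_end hp hab (hT.mem_support_of_dist_lt hab hb hp),
    hT.isAcyclic.eq_penultimate_of_adj_end hp hac (hT.mem_support_of_dist_lt hac hc hp)]

theorem disjoint_branch {a b c : α} (hab : T.Adj a b) (hac : T.Adj a c) (hbc : b ≠ c) :
    Disjoint (branch T a b) (branch T a c) :=
  Set.disjoint_left.2 fun _ hb hc => hbc (hT.eq_of_adj_of_dist_lt hab hac hb hc)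

theorem branch_subset_branch {a b c : α} (hab : T.Adj a b) (hbc : T.Adj b c) (hca : c ≠ a) :
    branch T b c ⊆ branch T a b := fun v hv => by
  by_contra hva
  simp only [branch, Set.mem_ofPred_eq, not_lt] at hv hva
  have := hT.dist_eq_dist_add_one_of_adj v hab
  exact hca (hT.eq_of_adj_of_dist_lt hbc hab.symm hv (by omega))

theorem mem_branch_of_adj {a b v w : α} (hab : T.Adj a b) (hv : v ∈ branch T a b)
    (hvw : T.Adj v w) (hwa : w ≠ a) : w ∈ branch T a b := by
  by_contra hw
  simp only [branch, Set.mem_ofPred_eq, not_lt] at hv hw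
  have := hT.dist_eq_dist_add_one_of_adj v hab
  have := hT.dist_eq_dist_add_one_of_adj w hab
  have := hT.dist_eq_dist_add_one_of_adj a hvw
  have := hT.dist_eq_dist_add_one_of_adj b hvw
  have : T.dist a v = T.dist v a := dist_comm
  have : T.dist a w = T.dist w a := dist_comm
  have : T.dist b v = T.dist v b := dist_comm
  have : T.dist b w = T.dist w b := dist_comm
  -- Now `w` is the neighbour of `v` towards `a`; so is the first step `u` of a geodesic from `v`
  -- to `b`, but `u` is closer to `b` than `w`.
  obtain ⟨p, -, hp⟩ := (hT.connected v b).exists_path_of_dist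
  cases p with
  | nil =>
    have : T.dist b a = 1 := dist_eq_one_iff_adj.2 hab.symm
    exact hwa (((hT.connected w a).dist_eq_zero_iff).1 (by omega))
  | @cons _ u _ hvu p =>
    have := T.dist_le p
    have := hT.dist_eq_dist_add_one_of_adj u hab
    have : T.dist a u = T.dist u a := dist_comm
    rw [Walk.length_cons] at hp
    obtain rfl := hT.eq_of_adj_of_dist_lt (v := a) hvu hvw (by omega) (by omega)
    omega

end SimpleGraph.IsTree

end Tree

namespace HasBinomialTree

variable {α : Type*} [DecidableEq α] {T : SimpleGraph α}

theorem exists_isPartialGreedyColoring (hT : T.IsTree) {t : ℕ} :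
    ∀ {a X}, HasBinomialTree T t a X → ∃ C : Fin t → Set α, IsPartialGreedyColoring T C ∧
      (∀ i, C i ⊆ branches T a X) ∧ ∀ i, ∃ w ∈ C i, T.Adj a w := by
  induction t with
  | zero =>
    exact fun _ => ⟨Fin.elim0, isPartialGreedyColoring_elim0, fun i => i.elim0, fun i => i.elim0⟩
  | succ t ih =>
    rintro a X ⟨b, hbX, hab, hb, ha⟩
    obtain ⟨E, hE, hEb, hEadj⟩ := ih hb
    obtain ⟨D, hD, hDa, hDadj⟩ := ih ha
    have hEab : ∀ i, E i ⊆ branch T a b := fun i v hv => by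
      obtain ⟨c, hc, hbc, hv⟩ := hEb i hv
      exact hT.branch_subset_branch hab hbc (by simpa using hc) hv
    have hdisj : Disjoint (branch T a b) (branches T a (insert b X)) :=
      Set.disjoint_right.2 fun v ⟨c, hc, hac, hv⟩ =>
        Set.disjoint_right.1
          (hT.disjoint_branch hab hac fun hbc => hc (hbc ▸ mem_insert_self b X)) hv
    have hnadj : ∀ v ∈ branch T a b, ∀ w ∈ branches T a (insert b X), ¬ T.Adj v w :=
      fun v hv w hw hvw => Set.disjoint_left.1 hdisj
        (hT.mem_branch_of_adj hab hv hvw fun hwa => notMem_branches (hwa ▸ hw)) hw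
    have hU := hE.union hD hEab hDa hdisj hnadj
    refine ⟨Fin.snoc (α := fun _ => Set α) (fun i => E i ∪ D i) {b},
      hU.snoc (fun i hbi => ?_) (fun i => ?_), fun i => ?_, fun i => ?_⟩
    · rcases hbi with hbi | hbi
      · exact notMem_branches (hEb i hbi)
      · exact Set.disjoint_left.1 hdisj (mem_branch_self hab) (hDa i hbi)
    · obtain ⟨w, hw, hbw⟩ := hEadj i
      exact ⟨w, Or.inl hw, hbw⟩
    · induction i using Fin.lastCases with
      | last => simpa using ⟨b, hbX, hab, mem_branch_self hab⟩
      | cast i =>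
        simp only [Fin.snoc_castSucc, Set.union_subset_iff]
        refine ⟨fun v hv => ⟨b, hbX, hab, hEab i hv⟩, fun v hv => ?_⟩
        obtain ⟨c, hc, hac, hv⟩ := hDa i hv
        exact ⟨c, fun hcX => hc (mem_insert_of_mem hcX), hac, hv⟩
    · induction i using Fin.lastCases with
      | last => simpa using hab
      | cast i =>
        obtain ⟨w, hw, haw⟩ := hDadj i
        exact ⟨w, by simp [hw], haw⟩

theorem succ_le_grundy [Fintype α] (hT : T.IsTree) {t : ℕ} {a : α} {X : Finset α}
    (h : HasBinomialTree T t a X) : t + 1 ≤ grundy T := by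
  obtain ⟨C, hC, hCa, hadj⟩ := h.exists_isPartialGreedyColoring hT
  exact (hC.snoc (fun i ha => notMem_branches (hCa i ha)) hadj).le_grundy

end HasBinomialTree

theorem SimpleGraph.IsTree.lt_mul_grundy_of_labels {α : Type*} [Fintype α] {T : SimpleGraph α}
    (hT : T.IsTree) {L : α → Finset ℕ} {q : ℕ} (hcard : ∀ a, #(L a) ≤ q)
    (hcov : ∀ a, ∀ i ∈ L a, ∀ j < i, j ∈ L a ∨ ∃ b, T.Adj a b ∧ j ∈ L b) {a : α} {j : ℕ}
    (hj : j ∈ L a) : j < q * grundy T := by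
  classical
  have hq := (card_inter_range_lt hj).trans_le (hcard a)
  have hbudget : j / q * q + #((L a ∪ (∅ : Finset α).biUnion L) ∩ range j) < j + q := by
    rw [biUnion_empty, union_empty]
    have := Nat.div_mul_le_self j q
    omega
  calc j < q * (j / q + 1) := Nat.lt_mul_div_succ j (by omega)
    _ ≤ q * grundy T := Nat.mul_le_mul_left q
      ((hasBinomialTree_of_labels hcard hcov _ a ∅ j hj hbudget).succ_le_grundy hT)

section LexProd

variable {α β : Type*} [Fintype α] [Fintype β]

theorem grundy_lexProd_le {T : SimpleGraph α} (hT : T.IsTree) (H : SimpleGraph β) :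
    grundy (lexProd T H) ≤ grundy T * grundy H :=
  grundy_le_of_forall_lt fun F hF ⟨a, x⟩ => by
    rw [mul_comm]
    exact hT.lt_mul_grundy_of_labels hF.card_fiberLabels_le
      (fun _ _ hi _ hj => hF.fiberLabels_cover hi hj) (mem_image_of_mem _ (mem_univ x))

theorem mul_grundy_le_grundy_lexProd (G : SimpleGraph α) (H : SimpleGraph β) :
    grundy G * grundy H ≤ grundy (lexProd G H) := by
  obtain ⟨S, hS⟩ := exists_isGreedyColoring_grundy G
  obtain ⟨R, hR⟩ := exists_isGreedyColoring_grundy H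
  exact (hS.isPartialGreedyColoring.lexProd hR.isPartialGreedyColoring).le_grundy

end LexProd

theorem grundy_lexProd_tree_general {α β : Type*} [Fintype α] [Fintype β]
    (T : SimpleGraph α) (hT : T.IsTree) (H : SimpleGraph β) :
    grundy (lexProd T H) = grundy T * grundy H :=
  (grundy_lexProd_le hT H).antisymm (mul_grundy_le_grundy_lexProd T H)

/-- If `T` is a finite nonempty tree and `H` a finite nonempty graph, then
`Γ(T[H]) = Γ(T) · Γ(H)`. -/
theorem grundy_lexProd_tree {α β : Type*} [Fintype α] [Fintype β]
    [Nonempty α] [Nonempty β]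
    (T : SimpleGraph α) (hT : T.IsTree) (H : SimpleGraph β) :
    grundy (lexProd T H) = grundy T * grundy H :=
  grundy_lexProd_tree_general T hT H
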